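/- The limits of the Prüfer angle at infinity are lim_{E → −∞} φ_{N+1}(E) = −(2N − 1)π/2 and lim_{E → +∞} φ_{N+1}(E) = π/2. Consequently (by continuity and strict monotonicity of φ_{N+1}) the equation φ_{N+1}(E) ∈ πℤ has exactly N distinct real solutions, i.e., the Dirichlet Hamiltonian H has exactly N distinct (simple) eigenvalues. -/

import Mathlib

/-!
Let `u` solve the Dirichlet recursion `u₀ = 0`, `u₁ = 1`, `u_{n+1} = (E - ε_n) u_n - u_{n-1}`.
Each Prüfer step acts on `(sin φ, cos φ)` as the transfer matrix of this recursion up to a nonzero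
factor, so `(u_n, u_{n-1})` is a nonzero multiple of `(sin φ_n, cos φ_n)`. Hence
`φ_{N+1}(E) ∈ πℤ` iff `u_{N+1}(E) = 0` iff `E` is an eigenvalue of `H`, with eigenvector
`(u_1, …, u_N)`. Every eigenvector is determined by its first entry, so the orthonormal
eigenbasis of the symmetric matrix `H` has pairwise distinct eigenvalues, and there are exactly
`N` of them.

For the limits: if `φ_n → (k + 1/2)π` then `cot φ_n → 0`, so eventually
`φ_{n+1} = arctan (E - ε_n - cot φ_n) + kπ → kπ ± π/2` as `E → ±∞`. Starting from `φ_1 = π/2`,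
the angles stay at `π/2` as `E → +∞` and drop by `π` at each step as `E → -∞`.
-/

open Filter

/-- One step of the Prüfer angle recursion: if `φ = kπ` (i.e. `sin φ = 0`) the next
angle is `(k − 1/2)π = φ − π/2`; otherwise, with `k = ⌊φ/π⌋` the unique integer with
`kπ < φ < (k+1)π`, the next angle is `arctan(E − e − cot φ) + kπ`. -/
noncomputable def pruferStep (e E φ : ℝ) : ℝ :=
  if Real.sin φ = 0 then φ - Real.pi / 2
  else Real.arctan (E - e - Real.cos φ / Real.sin φ) + Real.pi * ((⌊φ / Real.pi⌋ : ℤ) : ℝ)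

/-- The Prüfer angles: `φ_1(E) = π/2` and `φ_{n+1}(E) = pruferStep (ε n) E (φ_n(E))`
for `n ≥ 1`.  (The value at index `0` is junk, set to `π/2`.) -/
noncomputable def prufer (ε : ℕ → ℝ) (E : ℝ) : ℕ → ℝ
  | 0 => Real.pi / 2
  | 1 => Real.pi / 2
  | n + 2 => pruferStep (ε (n + 1)) E (prufer ε E (n + 1))

/-- The Dirichlet Hamiltonian: the `N × N` symmetric tridiagonal matrix with diagonal
entries `ε_n` and off-diagonal entries `1`. -/
def dirichletH (N : ℕ) (ε : Fin N → ℝ) : Matrix (Fin N) (Fin N) ℝ :=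
  fun i j =>
    if i = j then ε i
    else if i.val + 1 = j.val ∨ j.val + 1 = i.val then 1 else 0

open Real Topology

noncomputable def dirichletSol (ε : ℕ → ℝ) (E : ℝ) : ℕ → ℝ
  | 0 => 0
  | 1 => 1
  | n + 2 => (E - ε (n + 1)) * dirichletSol ε E (n + 1) - dirichletSol ε E n

lemma exists_smul_sin_cos_pruferStep (e E φ : ℝ) : ∃ s ≠ 0,
    s * sin (pruferStep e E φ) = (E - e) * sin φ - cos φ ∧
      s * cos (pruferStep e E φ) = sin φ := by
  by_cases hsin : sin φ = 0
  · refine ⟨1, one_ne_zero, ?_, ?_⟩ <;>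
      simp [pruferStep, hsin, sin_sub_pi_div_two, cos_sub_pi_div_two]
  set t := E - e - cos φ / sin φ
  set k := ⌊φ / π⌋
  have hc : cos (k * π) * cos (k * π) = 1 := by
    rw [← abs_mul_abs_self, abs_cos_int_mul_pi, one_mul]
  have hstep : pruferStep e E φ = arctan t + k * π := by
    rw [pruferStep, if_neg hsin, mul_comm]
  have hroot : sqrt (1 + t ^ 2) ≠ 0 := by positivity
  refine ⟨cos (k * π) * sin φ * sqrt (1 + t ^ 2), ?_, ?_, ?_⟩
  · simp [hsin, hroot, left_ne_zero_of_mul_eq_one hc]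
  · have ht : t * sin φ = (E - e) * sin φ - cos φ := by
      simp only [t]
      field_simp
    rw [hstep, sin_add, sin_int_mul_pi, mul_zero, add_zero, sin_arctan]
    field_simp
    linear_combination (t * sin φ) * hc + ht
  · rw [hstep, cos_add, sin_int_mul_pi, mul_zero, sub_zero, cos_arctan]
    field_simp
    linear_combination hc

lemma exists_dirichletSol_eq_smul_sin_cos_prufer (ε : ℕ → ℝ) (E : ℝ) (n : ℕ) : ∃ r ≠ 0,
    dirichletSol ε E (n + 1) = r * sin (prufer ε E (n + 1)) ∧
      dirichletSol ε E n = r * cos (prufer ε E (n + 1)) := by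
  induction n with
  | zero => exact ⟨1, one_ne_zero, by simp [dirichletSol, prufer]⟩
  | succ n ih =>
    obtain ⟨r, hr, hsin, hcos⟩ := ih
    obtain ⟨s, hs, hsin', hcos'⟩ :=
      exists_smul_sin_cos_pruferStep (ε (n + 1)) E (prufer ε E (n + 1))
    refine ⟨r * s, mul_ne_zero hr hs, ?_, ?_⟩
    · change (E - ε (n + 1)) * dirichletSol ε E (n + 1) - dirichletSol ε E n = _
      rw [hsin, hcos, mul_assoc, prufer, hsin']
      ring
    · rw [hsin, mul_assoc, prufer, hcos']

lemma sin_prufer_eq_zero_iff (ε : ℕ → ℝ) (E : ℝ) (n : ℕ) :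
    sin (prufer ε E (n + 1)) = 0 ↔ dirichletSol ε E (n + 1) = 0 := by
  obtain ⟨r, hr, hsin, -⟩ := exists_dirichletSol_eq_smul_sin_cos_prufer ε E n
  simp [hsin, hr]

section DirichletEigenvectors

variable {N : ℕ} (ε : ℕ → ℝ)

/-- A vector on `Fin N` as the sequence `0, v₀, …, v_{N-1}, 0, 0, …`, matching the paper's
indexing `u_1, …, u_N` with Dirichlet conditions `u_0 = u_{N+1} = 0`. -/
def zeroPad (v : Fin N → ℝ) (n : ℕ) : ℝ :=
  ∑ j : Fin N, if j.val + 1 = n then v j else 0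

@[simp]
lemma zeroPad_zero (v : Fin N → ℝ) : zeroPad v 0 = 0 := by
  simp [zeroPad]

@[simp]
lemma zeroPad_succ (v : Fin N → ℝ) (i : Fin N) : zeroPad v (i.val + 1) = v i := by
  simp [zeroPad, Fin.val_eq_val]

lemma zeroPad_of_lt (v : Fin N → ℝ) {n : ℕ} (hn : N < n) : zeroPad v n = 0 :=
  Finset.sum_eq_zero fun j _ => if_neg (by omega)

lemma mulVec_dirichletH_apply (v : Fin N → ℝ) (i : Fin N) :
    (dirichletH N (fun i => ε (i.val + 1))).mulVec v i =
      zeroPad v i + ε (i + 1) * zeroPad v (i + 1) + zeroPad v (i + 2) := by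
  simp only [zeroPad, Matrix.mulVec, dotProduct, Finset.mul_sum, ← Finset.sum_add_distrib]
  refine Finset.sum_congr rfl fun j _ => ?_
  simp only [dirichletH, Fin.ext_iff]
  split_ifs <;> first | omega | ring

lemma mulVec_dirichletH_eq_smul_iff (v : Fin N → ℝ) (E : ℝ) :
    (dirichletH N (fun i => ε (i.val + 1))).mulVec v = E • v ↔
      ∀ n < N, zeroPad v (n + 2) = (E - ε (n + 1)) * zeroPad v (n + 1) - zeroPad v n := by
  rw [funext_iff, Fin.forall_iff]
  refine forall₂_congr fun n hn => ?_
  rw [mulVec_dirichletH_apply, Pi.smul_apply, smul_eq_mul, ← zeroPad_succ v ⟨n, hn⟩]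
  constructor <;> intro h <;> linarith

lemma eq_mul_dirichletSol_of_recurrence {w : ℕ → ℝ} {E : ℝ} (h0 : w 0 = 0)
    (hrec : ∀ n < N, w (n + 2) = (E - ε (n + 1)) * w (n + 1) - w n) :
    ∀ n ≤ N + 1, w n = w 1 * dirichletSol ε E n
  | 0, _ => by simp [h0, dirichletSol]
  | 1, _ => by simp [dirichletSol]
  | n + 2, hn => by
    rw [hrec n (by omega), eq_mul_dirichletSol_of_recurrence h0 hrec (n + 1) (by omega),
      eq_mul_dirichletSol_of_recurrence h0 hrec n (by omega), dirichletSol]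
    ring

lemma zeroPad_eq_mul_dirichletSol {v : Fin N → ℝ} {E : ℝ}
    (hv : (dirichletH N (fun i => ε (i.val + 1))).mulVec v = E • v) {n : ℕ} (hn : n ≤ N + 1) :
    zeroPad v n = zeroPad v 1 * dirichletSol ε E n :=
  eq_mul_dirichletSol_of_recurrence ε (zeroPad_zero v)
    ((mulVec_dirichletH_eq_smul_iff ε v E).1 hv) n hn

lemma zeroPad_one_ne_zero {v : Fin N → ℝ} {E : ℝ} (hv0 : v ≠ 0)
    (hv : (dirichletH N (fun i => ε (i.val + 1))).mulVec v = E • v) : zeroPad v 1 ≠ 0 := by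
  intro h1
  refine hv0 (funext fun i => ?_)
  rw [← zeroPad_succ v i, zeroPad_eq_mul_dirichletSol ε hv (by omega), h1, zero_mul, Pi.zero_apply]

lemma smul_eq_smul_of_mulVec_dirichletH_eq_smul {v w : Fin N → ℝ} {E : ℝ}
    (hv : (dirichletH N (fun i => ε (i.val + 1))).mulVec v = E • v)
    (hw : (dirichletH N (fun i => ε (i.val + 1))).mulVec w = E • w) :
    zeroPad w 1 • v = zeroPad v 1 • w := by
  funext i
  rw [Pi.smul_apply, Pi.smul_apply, smul_eq_mul, smul_eq_mul, ← zeroPad_succ v i,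
    ← zeroPad_succ w i,
    zeroPad_eq_mul_dirichletSol ε hv (n := i + 1) (by omega),
    zeroPad_eq_mul_dirichletSol ε hw (n := i + 1) (by omega)]
  ring

theorem exists_mulVec_dirichletH_eq_smul_iff (E : ℝ) :
    (∃ v : Fin N → ℝ, v ≠ 0 ∧ (dirichletH N (fun i => ε (i.val + 1))).mulVec v = E • v) ↔
      dirichletSol ε E (N + 1) = 0 := by
  constructor
  · rintro ⟨v, hv0, hv⟩
    have h := zeroPad_eq_mul_dirichletSol ε hv le_rfl
    rw [zeroPad_of_lt v (Nat.lt_succ_self N)] at h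
    exact (mul_eq_zero.1 h.symm).resolve_left (zeroPad_one_ne_zero ε hv0 hv)
  · intro hsol
    set v : Fin N → ℝ := fun i => dirichletSol ε E (i.val + 1)
    have hpad : ∀ n ≤ N + 1, zeroPad v n = dirichletSol ε E n := by
      rintro (_ | n) hn
      · simp [dirichletSol]
      rcases Nat.lt_or_ge n N with h | h
      · exact zeroPad_succ v ⟨n, h⟩
      · rw [show n = N by omega, hsol, zeroPad_of_lt v (by omega)]
    refine ⟨v, fun h => ?_, (mulVec_dirichletH_eq_smul_iff ε v E).2 fun n hn => ?_⟩
    · simpa [h, zeroPad, dirichletSol] using hpad 1 (by omega)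
    · rw [hpad n (by omega), hpad (n + 1) (by omega), hpad (n + 2) (by omega)]
      rfl

end DirichletEigenvectors

lemma setOf_exists_mulVec_eq_smul_eq_spectrum {n K : Type*} [Fintype n] [DecidableEq n] [Field K]
    (A : Matrix n n K) : {E | ∃ v : n → K, v ≠ 0 ∧ A.mulVec v = E • v} = spectrum K A := by
  ext E
  rw [← Matrix.spectrum_toLin', ← Module.End.hasEigenvalue_iff_mem_spectrum,
    Module.End.hasEigenvalue_iff, Submodule.ne_bot_iff]
  simp [and_comm]

lemma isHermitian_dirichletH (N : ℕ) (d : Fin N → ℝ) : (dirichletH N d).IsHermitian := by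
  ext i j
  by_cases h : i = j
  · simp [h]
  · simp [dirichletH, h, Ne.symm h, or_comm]

lemma injective_eigenvalues_dirichletH (N : ℕ) (ε : ℕ → ℝ) :
    Function.Injective (isHermitian_dirichletH N fun i => ε (i.val + 1)).eigenvalues := by
  set hH := isHermitian_dirichletH N fun i => ε (i.val + 1)
  have hB := orthonormal_iff_ite.1 hH.eigenvectorBasis.orthonormal
  intro i j hij
  by_contra hne
  have hBi := hH.mulVec_eigenvectorBasis i
  have hBj := hH.mulVec_eigenvectorBasis j
  rw [hij] at hBi
  have hdep := congrArg (fun x => inner ℝ (hH.eigenvectorBasis i) (WithLp.toLp 2 x))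
    (smul_eq_smul_of_mulVec_dirichletH_eq_smul ε hBi hBj)
  simp only [WithLp.toLp_smul, WithLp.toLp_ofLp, inner_smul_right, hB, if_pos, if_neg hne] at hdep
  refine zeroPad_one_ne_zero ε (fun h => ?_) hBj (by simpa using hdep)
  exact hH.eigenvectorBasis.orthonormal.ne_zero j (by simpa using congrArg (WithLp.toLp 2) h)

lemma ncard_setOf_exists_mulVec_dirichletH_eq_smul (N : ℕ) (ε : ℕ → ℝ) :
    {E : ℝ | ∃ v : Fin N → ℝ, v ≠ 0 ∧
      (dirichletH N (fun i => ε (i.val + 1))).mulVec v = E • v}.ncard = N := by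
  rw [setOf_exists_mulVec_eq_smul_eq_spectrum,
    (isHermitian_dirichletH N _).spectrum_real_eq_range_eigenvalues,
    Set.ncard_range_of_injective (injective_eigenvalues_dirichletH N ε), Nat.card_fin]

lemma pruferStep_of_mem_Ioo {e E φ : ℝ} {k : ℤ} (hφ : φ ∈ Set.Ioo (k * π) ((k + 1) * π)) :
    pruferStep e E φ = arctan (E - e - cos φ / sin φ) + π * k := by
  have hsin : sin φ ≠ 0 := by
    refine sin_ne_zero_iff.2 fun n hn => ?_
    rw [← hn] at hφ
    have h1 : (k : ℝ) < n := lt_of_mul_lt_mul_right hφ.1 pi_pos.le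
    have h2 : (n : ℝ) < k + 1 := lt_of_mul_lt_mul_right hφ.2 pi_pos.le
    norm_cast at h1 h2
    omega
  have hfloor : ⌊φ / π⌋ = k := by
    rw [Int.floor_eq_iff, le_div_iff₀ pi_pos, div_lt_iff₀ pi_pos]
    exact ⟨hφ.1.le, hφ.2⟩
  rw [pruferStep, if_neg hsin, hfloor]

lemma tendsto_cos_div_sin_of_cos_eq_zero {α : Type*} {l : Filter α} {f : α → ℝ} {c : ℝ}
    (hc : cos c = 0) (hf : Tendsto f l (𝓝 c)) :
    Tendsto (fun x => cos (f x) / sin (f x)) l (𝓝 0) := by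
  have hs : sin c ≠ 0 := fun h => by simpa [h, hc] using sin_sq_add_cos_sq c
  have h := ((continuous_cos.tendsto c).comp hf).div ((continuous_sin.tendsto c).comp hf) hs
  rwa [hc, zero_div] at h

lemma tendsto_pruferStep {l : Filter ℝ} {f : ℝ → ℝ} {e a : ℝ} (k : ℤ)
    (hf : Tendsto f l (𝓝 (k * π + π / 2)))
    (harctan : Tendsto (fun E => arctan (E - e - cos (f E) / sin (f E))) l (𝓝 a)) :
    Tendsto (fun E => pruferStep e E (f E)) l (𝓝 (a + π * k)) := by
  have hmem : ∀ᶠ E in l, f E ∈ Set.Ioo (k * π) ((k + 1) * π) :=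
    hf.eventually (isOpen_Ioo.mem_nhds ⟨by linarith [pi_pos], by linarith [pi_pos]⟩)
  exact (harctan.add_const _).congr' (hmem.mono fun E hE => (pruferStep_of_mem_Ioo hE).symm)

lemma tendsto_prufer_atTop (ε : ℕ → ℝ) (n : ℕ) :
    Tendsto (fun E => prufer ε E (n + 1)) atTop (𝓝 (π / 2)) := by
  induction n with
  | zero => exact tendsto_const_nhds
  | succ n ih =>
    have hcot := tendsto_cos_div_sin_of_cos_eq_zero cos_pi_div_two ih
    have harg : Tendsto
        (fun E => E - ε (n + 1) - cos (prufer ε E (n + 1)) / sin (prufer ε E (n + 1)))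
        atTop atTop := by
      simpa only [sub_eq_add_neg, id] using
        (tendsto_atTop_add_const_right _ _ tendsto_id).atTop_add hcot.neg
    have h := tendsto_pruferStep 0 (by simpa using ih)
      ((tendsto_arctan_atTop.mono_right nhdsWithin_le_nhds).comp harg)
    rwa [Int.cast_zero, mul_zero, add_zero] at h

lemma tendsto_prufer_atBot (ε : ℕ → ℝ) (n : ℕ) :
    Tendsto (fun E => prufer ε E (n + 1)) atBot (𝓝 (-((2 * n - 1) * π / 2))) := by
  induction n with
  | zero =>
    rw [show -((2 * ((0 : ℕ) : ℝ) - 1) * π / 2) = π / 2 by push_cast; ring]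
    exact tendsto_const_nhds
  | succ n ih =>
    have hcos : cos (-((2 * n - 1) * π / 2)) = 0 := cos_eq_zero_iff.2 ⟨-n, by push_cast; ring⟩
    have hcot := tendsto_cos_div_sin_of_cos_eq_zero hcos ih
    have harg : Tendsto
        (fun E => E - ε (n + 1) - cos (prufer ε E (n + 1)) / sin (prufer ε E (n + 1)))
        atBot atBot := by
      simpa only [sub_eq_add_neg, id] using
        (tendsto_atBot_add_const_right _ _ tendsto_id).atBot_add hcot.neg
    have h := tendsto_pruferStep (-n) (by convert ih using 2; push_cast; ring)
      ((tendsto_arctan_atBot.mono_right nhdsWithin_le_nhds).comp harg)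
    rwa [show -(π / 2) + π * ((-n : ℤ) : ℝ) = -((2 * ((n + 1 : ℕ) : ℝ) - 1) * π / 2) by
      push_cast; ring] at h

theorem prufer_limits_and_eigenvalue_count_general
    (N : ℕ)
    (ε : ℕ → ℝ) :
    Tendsto (fun E : ℝ => prufer ε E (N + 1)) atBot
      (nhds (-((2 * (N : ℝ) - 1) * Real.pi / 2))) ∧
    Tendsto (fun E : ℝ => prufer ε E (N + 1)) atTop (nhds (Real.pi / 2)) ∧
    {E : ℝ | ∃ k : ℤ, prufer ε E (N + 1) = k * Real.pi}.ncard = N ∧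
    {E : ℝ | ∃ v : Fin N → ℝ, v ≠ 0 ∧
      (dirichletH N (fun i => ε (i.val + 1))).mulVec v = E • v}.ncard = N := by
  have hzeros : {E : ℝ | ∃ k : ℤ, prufer ε E (N + 1) = k * π} =
      {E : ℝ | ∃ v : Fin N → ℝ, v ≠ 0 ∧
        (dirichletH N (fun i => ε (i.val + 1))).mulVec v = E • v} := by
    ext E
    rw [Set.mem_ofPred_eq, Set.mem_ofPred_eq, exists_mulVec_dirichletH_eq_smul_iff,
      ← sin_prufer_eq_zero_iff, sin_eq_zero_iff]
    exact exists_congr fun k => eq_comm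
  refine ⟨tendsto_prufer_atBot ε N, tendsto_prufer_atTop ε N, ?_,
    ncard_setOf_exists_mulVec_dirichletH_eq_smul N ε⟩
  rw [hzeros, ncard_setOf_exists_mulVec_dirichletH_eq_smul N ε]

/-- The limits of the Prüfer angle at infinity are
`lim_{E → −∞} φ_{N+1}(E) = −(2N − 1)π/2` and `lim_{E → +∞} φ_{N+1}(E) = π/2`.
Consequently the equation `φ_{N+1}(E) ∈ πℤ` has exactly `N` distinct real solutions,
i.e. the Dirichlet Hamiltonian has exactly `N` distinct eigenvalues. -/
theorem prufer_limits_and_eigenvalue_count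
    (N : ℕ) (hN : 1 ≤ N) (W : ℝ) (hW : 0 ≤ W)
    (ε : ℕ → ℝ) (hε : ∀ n, 1 ≤ n → n ≤ N → ε n ∈ Set.Icc 0 W) :
    Tendsto (fun E : ℝ => prufer ε E (N + 1)) atBot
      (nhds (-((2 * (N : ℝ) - 1) * Real.pi / 2))) ∧
    Tendsto (fun E : ℝ => prufer ε E (N + 1)) atTop (nhds (Real.pi / 2)) ∧
    {E : ℝ | ∃ k : ℤ, prufer ε E (N + 1) = k * Real.pi}.ncard = N ∧
    {E : ℝ | ∃ v : Fin N → ℝ, v ≠ 0 ∧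
      (dirichletH N (fun i => ε (i.val + 1))).mulVec v = E • v}.ncard = N :=
  prufer_limits_and_eigenvalue_count_general N ε
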